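/- Fix a ∈ [−1,1], μ > 0, γ > 1 and τ > 0. Let (v, u, S) be a C¹ solution of the relaxed system on an open set of (t,x) with v > 0 and 2τaS + μ > 0, and set W = (v, u, S)ᵀ ∈ ℝ³. Define the 3×3 matrices A⁰(W) = diag(γ v^{−γ−1}, 1, τv/(2τaS + μ)), A¹(W) with rows (0, −γ v^{−γ−1}, 0), (−γ v^{−γ−1}, 0, −1), (0, −1, 0), and B(W) = diag(0, 0, v/(2τaS + μ)). Then: (i) pointwise, A⁰(W) ∂_t W + A¹(W) ∂_x W + B(W) W = 0; and (ii) A⁰(W) and A¹(W) are symmetric and A⁰(W) is positive definite. -/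

import Mathlib

open MeasureTheory Filter Set intervalIntegral Matrix

noncomputable section

/-- Squared `H^k(ℝ)` norm: sum of the squared `L²` norms of the derivatives up to order `k`. -/
def HSq (k : ℕ) (f : ℝ → ℝ) : ℝ :=
  ∑ j ∈ Finset.range (k + 1), ∫ x : ℝ, (iteratedDeriv j f x) ^ 2

/-- Classical membership in `H^k(ℝ)`. -/
def MemH (k : ℕ) (f : ℝ → ℝ) : Prop :=
  ContDiff ℝ k f ∧ ∀ j ≤ k, Integrable fun x => (iteratedDeriv j f x) ^ 2

/-- Partial derivative in time. -/
def pt (f : ℝ → ℝ → ℝ) (t x : ℝ) : ℝ := deriv (fun s => f s x) t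

/-- Partial derivative in space. -/
def px (f : ℝ → ℝ → ℝ) (t x : ℝ) : ℝ := deriv (f t) x

/-- Continuity of `t ↦ f t` as an `H^k`-valued map on `I`. -/
def ContH (k : ℕ) (I : Set ℝ) (f : ℝ → ℝ → ℝ) : Prop :=
  ∀ s ∈ I, Tendsto (fun t => HSq k fun x => f t x - f s x) (nhdsWithin s I) (nhds 0)

/-- `f ∈ C⁰(I; H^k) ∩ C¹(I; H^(k-1))`. -/
def RegH (k : ℕ) (I : Set ℝ) (f : ℝ → ℝ → ℝ) : Prop :=
  (∀ t ∈ I, MemH k (f t)) ∧ ContH k I f ∧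
  (∀ x, ∀ t ∈ I, DifferentiableAt ℝ (fun s => f s x) t) ∧
  (∀ t ∈ I, MemH (k - 1) fun x => pt f t x) ∧ ContH (k - 1) I fun t x => pt f t x

/-- The 1-d isentropic compressible Navier–Stokes system with Oldroyd-type constitutive
law, in Lagrangian coordinates, at a point `(t, x)`:
`v_t = u_x`, `u_t + (v^(-γ))_x = S_x`, `τ (S_t - (2 a S / v) u_x) + S = μ u_x / v`. -/
def RelaxedSystem (a μ γ τ : ℝ) (v u S : ℝ → ℝ → ℝ) (t x : ℝ) : Prop :=
  pt v t x = px u t x ∧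
  pt u t x + deriv (fun y => v t y ^ (-γ)) x = px S t x ∧
  τ * (pt S t x - 2 * a * S t x / v t x * px u t x) + S t x = μ * px u t x / v t x

/-- The energy functional `E(t)`. -/
def En (τ : ℝ) (v u S : ℝ → ℝ → ℝ) (t : ℝ) : ℝ :=
  sSup ((fun s => HSq 2 (fun x => v s x - 1) + HSq 2 (u s) + τ * HSq 2 (S s)) '' Icc 0 t)

/-- The dissipation functional `D(t)`. -/
def Dn (v u S : ℝ → ℝ → ℝ) (t : ℝ) : ℝ :=
  HSq 1 (fun x => px v t x) + HSq 1 (fun x => px u t x) + HSq 2 (S t)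

/-- A solution of the relaxed system on `[0,T] × ℝ` in the class
`C⁰([0,T]; H²) ∩ C¹([0,T]; H¹)` with `v > 0` and `2τaS + μ > 0`. -/
def IsSolOn (a μ γ τ T : ℝ) (v u S : ℝ → ℝ → ℝ) : Prop :=
  (∀ t ∈ Icc (0 : ℝ) T, ∀ x : ℝ,
      0 < v t x ∧ 0 < 2 * τ * a * S t x + μ ∧ RelaxedSystem a μ γ τ v u S t x) ∧
  RegH 2 (Icc 0 T) (fun t x => v t x - 1) ∧ RegH 2 (Icc 0 T) u ∧ RegH 2 (Icc 0 T) S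


/-- The symmetrizer `A⁰(W) = diag(γ v^(-γ-1), 1, τv/(2τaS + μ))`. -/
def A0 (a μ γ τ : ℝ) (v S : ℝ) : Matrix (Fin 3) (Fin 3) ℝ :=
  !![γ * v ^ (-γ - 1), 0, 0;
     0, 1, 0;
     0, 0, τ * v / (2 * τ * a * S + μ)]

/-- The symmetric flux matrix `A¹(W)`. -/
def A1 (γ : ℝ) (v : ℝ) : Matrix (Fin 3) (Fin 3) ℝ :=
  !![0, -(γ * v ^ (-γ - 1)), 0;
     -(γ * v ^ (-γ - 1)), 0, -1;
     0, -1, 0]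

/-- The relaxation matrix `B(W) = diag(0, 0, v/(2τaS + μ))`. -/
def Bm (a μ τ : ℝ) (v S : ℝ) : Matrix (Fin 3) (Fin 3) ℝ :=
  !![0, 0, 0;
     0, 0, 0;
     0, 0, v / (2 * τ * a * S + μ)]

/-!
Weighting the three equations by `γ v^(-γ-1)`, `1` and `v / (2τaS + μ)` (the diagonal of `A⁰`)
symmetrises them. The chain rule `(v^(-γ))ₓ = -γ v^(-γ-1) vₓ` makes the coupling between the
first two equations `-γ v^(-γ-1)` in both directions, and in the weighted constitutive law the two
`uₓ` terms combine to `(2τaS + μ) uₓ / v`, leaving exactly `-uₓ`, which mirrors the `-Sₓ` of the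
momentum equation.
-/

theorem A0_eq_diagonal (a μ γ τ v S : ℝ) :
    A0 a μ γ τ v S = diagonal ![γ * v ^ (-γ - 1), 1, τ * v / (2 * τ * a * S + μ)] :=
  (diagonal_vec3 _ _ _).symm

theorem A0_transpose (a μ γ τ v S : ℝ) : (A0 a μ γ τ v S)ᵀ = A0 a μ γ τ v S := by
  rw [A0_eq_diagonal, diagonal_transpose]

theorem A1_transpose (γ v : ℝ) : (A1 γ v)ᵀ = A1 γ v := by
  simp [A1, ← Matrix.ext_iff, Fin.forall_fin_succ]

theorem A0_posDef {a μ γ τ v S : ℝ} (hγ : 0 < γ) (hτ : 0 < τ) (hv : 0 < v)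
    (hd : 0 < 2 * τ * a * S + μ) : (A0 a μ γ τ v S).PosDef := by
  rw [A0_eq_diagonal, posDef_diagonal_iff, Fin.forall_fin_succ, Fin.forall_fin_succ,
    Fin.forall_fin_one]
  exact ⟨mul_pos hγ (Real.rpow_pos_of_pos hv _), one_pos, div_pos (mul_pos hτ hv) hd⟩

theorem A0_mulVec_add_A1_mulVec_add_Bm_mulVec_eq_zero {a μ γ τ v u S vt ut St vx ux Sx : ℝ}
    (hv : v ≠ 0) (hd : 2 * τ * a * S + μ ≠ 0) (h₁ : vt = ux)
    (h₂ : ut - γ * v ^ (-γ - 1) * vx = Sx)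
    (h₃ : τ * (St - 2 * a * S / v * ux) + S = μ * ux / v) :
    A0 a μ γ τ v S *ᵥ ![vt, ut, St] + A1 γ v *ᵥ ![vx, ux, Sx] + Bm a μ τ v S *ᵥ ![v, u, S]
      = 0 := by
  have hweighted : τ * v / (2 * τ * a * S + μ) * St + v / (2 * τ * a * S + μ) * S = ux := by
    rw [div_mul_eq_mul_div, div_mul_eq_mul_div, ← add_div, div_eq_iff hd]
    field_simp at h₃
    linear_combination h₃
  simp only [A0, A1, Bm, mulVec_cons, mulVec_empty, funext_iff, Fin.forall_fin_succ, Pi.add_apply,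
    Pi.smul_apply, Pi.zero_apply, Function.comp_apply, smul_eq_mul, cons_val_zero, cons_val_succ,
    cons_val_fin_one, head_cons, tail_cons, forall_const]
  exact ⟨by linear_combination (γ * v ^ (-γ - 1)) * h₁, by linear_combination h₂,
    by linear_combination hweighted⟩

theorem differentiableAt_slice_of_contDiffOn {E F G : Type*} [NormedAddCommGroup E]
    [NormedSpace ℝ E] [NormedAddCommGroup F] [NormedSpace ℝ F] [NormedAddCommGroup G]
    [NormedSpace ℝ G] {n : WithTop ℕ∞} (hn : n ≠ 0) {f : E → F → G} {U : Set (E × F)}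
    (hU : IsOpen U) (hf : ContDiffOn ℝ n (fun p : E × F => f p.1 p.2) U) {t : E} {x : F}
    (htx : (t, x) ∈ U) : DifferentiableAt ℝ (f t) x :=
  ((hf.contDiffAt (hU.mem_nhds htx)).differentiableAt hn).comp x
    (differentiableAt_const t |>.prodMk differentiableAt_id)

theorem symmetric_hyperbolic_form_general
    (a μ γ τ : ℝ) (hγ : 1 < γ) (hτ : 0 < τ)
    (U : Set (ℝ × ℝ)) (hU : IsOpen U) (v u S : ℝ → ℝ → ℝ)
    (hv : ContDiffOn ℝ 1 (fun p : ℝ × ℝ => v p.1 p.2) U)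
    (hpos : ∀ t x, (t, x) ∈ U → 0 < v t x ∧ 0 < 2 * τ * a * S t x + μ)
    (hsol : ∀ t x, (t, x) ∈ U → RelaxedSystem a μ γ τ v u S t x) :
    ∀ t x, (t, x) ∈ U →
      (A0 a μ γ τ (v t x) (S t x) *ᵥ ![pt v t x, pt u t x, pt S t x]
          + A1 γ (v t x) *ᵥ ![px v t x, px u t x, px S t x]
          + Bm a μ τ (v t x) (S t x) *ᵥ ![v t x, u t x, S t x] = 0) ∧
        (A0 a μ γ τ (v t x) (S t x))ᵀ = A0 a μ γ τ (v t x) (S t x) ∧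
        (A1 γ (v t x))ᵀ = A1 γ (v t x) ∧
        (A0 a μ γ τ (v t x) (S t x)).PosDef := by
  intro t x htx
  obtain ⟨hv₀, hd₀⟩ := hpos t x htx
  obtain ⟨h₁, h₂, h₃⟩ := hsol t x htx
  have hpressure : deriv (fun y => v t y ^ (-γ)) x = px v t x * -γ * v t x ^ (-γ - 1) :=
    deriv_rpow_const (differentiableAt_slice_of_contDiffOn one_ne_zero hU hv htx)
      (Or.inl hv₀.ne')
  rw [hpressure] at h₂
  refine ⟨A0_mulVec_add_A1_mulVec_add_Bm_mulVec_eq_zero hv₀.ne' hd₀.ne' h₁ (by linear_combination h₂) h₃,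
    A0_transpose .., A1_transpose .., A0_posDef (by linarith) hτ hv₀ hd₀⟩

/-- The relaxed system is symmetric hyperbolic: a `C¹` solution `W = (v,u,S)ᵀ` with
`v > 0` and `2τaS + μ > 0` satisfies `A⁰(W) ∂ₜW + A¹(W) ∂ₓW + B(W) W = 0` pointwise,
with `A⁰(W)`, `A¹(W)` symmetric and `A⁰(W)` positive definite. -/
theorem symmetric_hyperbolic_form
    (a μ γ τ : ℝ) (ha : a ∈ Icc (-1 : ℝ) 1) (hμ : 0 < μ) (hγ : 1 < γ) (hτ : 0 < τ)
    (U : Set (ℝ × ℝ)) (hU : IsOpen U) (v u S : ℝ → ℝ → ℝ)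
    (hv : ContDiffOn ℝ 1 (fun p : ℝ × ℝ => v p.1 p.2) U)
    (hu : ContDiffOn ℝ 1 (fun p : ℝ × ℝ => u p.1 p.2) U)
    (hS : ContDiffOn ℝ 1 (fun p : ℝ × ℝ => S p.1 p.2) U)
    (hpos : ∀ t x, (t, x) ∈ U → 0 < v t x ∧ 0 < 2 * τ * a * S t x + μ)
    (hsol : ∀ t x, (t, x) ∈ U → RelaxedSystem a μ γ τ v u S t x) :
    ∀ t x, (t, x) ∈ U →
      (A0 a μ γ τ (v t x) (S t x) *ᵥ ![pt v t x, pt u t x, pt S t x]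
          + A1 γ (v t x) *ᵥ ![px v t x, px u t x, px S t x]
          + Bm a μ τ (v t x) (S t x) *ᵥ ![v t x, u t x, S t x] = 0) ∧
        (A0 a μ γ τ (v t x) (S t x))ᵀ = A0 a μ γ τ (v t x) (S t x) ∧
        (A1 γ (v t x))ᵀ = A1 γ (v t x) ∧
        (A0 a μ γ τ (v t x) (S t x)).PosDef :=
  symmetric_hyperbolic_form_general a μ γ τ hγ hτ U hU v u S hv hpos hsol
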